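/- Fix α ∈ (0, 1/2). Let (W_k^n)_{n≥0, 0≤k<2^n} be real numbers and set V^n = max_{0≤k<2^n} |W_k^n|. Suppose Σ_{n=0}^∞ 2^{−n(1/2−α)} V^n < ∞. Then the series Z(t) = Σ_{n=0}^∞ Σ_{k=0}^{2^n−1} W_k^n ∫_0^t H_k^n(s) ds converges uniformly on [0,1], and the resulting function Z satisfies sup_{0≤s<t≤1} |Z(t)−Z(s)|/(t−s)^α ≤ 2^{2α} Σ_{n=0}^∞ 2^{−n(1/2−α)} V^n. -/

import Mathlib

open MeasureTheory Filter Finset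

/-- The Haar step function: `1` on `[0,1/2)`, `−1` on `[1/2,1]`, `0` otherwise. -/
noncomputable def haar (t : ℝ) : ℝ :=
  if 0 ≤ t ∧ t < 1 / 2 then 1 else if 1 / 2 ≤ t ∧ t ≤ 1 then -1 else 0

/-- The Haar family: `H₀⁰ = 1` on `[0,1]`, and for `n ≥ 1`, `Hₖⁿ(t) = 2^{n/2} H(2ⁿ t − k)`. -/
noncomputable def haarFn (n k : ℕ) (t : ℝ) : ℝ :=
  if n = 0 then (if 0 ≤ t ∧ t ≤ 1 then 1 else 0)
  else 2 ^ ((n : ℝ) / 2) * haar (2 ^ n * t - k)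

/-- The Schauder functions of the Lévy–Ciesielski construction: `t ↦ ∫₀ᵗ Hₖⁿ(s) ds`. -/
noncomputable def schauder (n k : ℕ) (t : ℝ) : ℝ := ∫ s in (0 : ℝ)..t, haarFn n k s

/-! For `n ≥ 1` the Schauder function `∫₀ᵗ Hₖⁿ` equals `2^{-n/2} tent (2ⁿ t - k)`, a tent of
height `2^{-n/2}/2` supported on the `k`-th dyadic interval of length `2⁻ⁿ`. So the level-`n` sum
`gₙ = Σₖ Wₖⁿ ∫₀ᵗ Hₖⁿ` has at most one nonzero term at each point and `|gₙ| ≤ Vⁿ 2^{-n/2}/2`, while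
its derivative `Σₖ Wₖⁿ Hₖⁿ` has at most two and `gₙ` is `2 Vⁿ 2^{n/2}`-Lipschitz. An increment
bounded by both `A = 2 Vⁿ 2^{n/2} (t - s)` and `B = Vⁿ 2^{-n/2}` is bounded by
`A^α B^{1-α} = 2^α 2^{-n(1/2-α)} Vⁿ (t - s)^α`. Summing over `n` with the Weierstrass M-test
gives the uniform convergence and the Hölder bound. -/

lemma card_filter_mem_Ioo_le_one (s : Finset ℕ) (x : ℝ) :
    #(s.filter fun k : ℕ => (k : ℝ) ∈ Set.Ioo (x - 1) x) ≤ 1 := by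
  refine Finset.card_le_one.2 fun a ha b hb => ?_
  simp only [Finset.mem_filter, Set.mem_Ioo] at ha hb
  have h₁ : (a : ℝ) < b + 1 := by linarith [ha.2.2, hb.2.1]
  have h₂ : (b : ℝ) < a + 1 := by linarith [hb.2.2, ha.2.1]
  norm_cast at h₁ h₂
  omega

lemma card_filter_mem_Icc_le_two (s : Finset ℕ) (x : ℝ) :
    #(s.filter fun k : ℕ => (k : ℝ) ∈ Set.Icc (x - 1) x) ≤ 2 := by
  have hsub : (s.filter fun k : ℕ => (k : ℝ) ∈ Set.Icc (x - 1) x) ⊆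
      Finset.Icc (⌊x⌋₊ - 1) ⌊x⌋₊ := by
    intro k hk
    simp only [Finset.mem_filter, Set.mem_Icc] at hk
    have h₁ : k ≤ ⌊x⌋₊ := Nat.le_floor hk.2.2
    have h₂ : ⌊x⌋₊ ≤ k + 1 := Nat.floor_le_of_le (by push_cast; linarith [hk.2.1])
    simp only [Finset.mem_Icc]
    omega
  exact (Finset.card_le_card hsub).trans (by rw [Nat.card_Icc]; omega)

lemma abs_sum_le_card_filter_mul {ι : Type*} {s : Finset ι} {f : ι → ℝ} (p : ι → Prop)
    [DecidablePred p] {C : ℝ} (hp : ∀ k ∈ s, f k ≠ 0 → p k) (hC : ∀ k ∈ s, |f k| ≤ C) :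
    |∑ k ∈ s, f k| ≤ #(s.filter p) * C := by
  rw [← Finset.sum_filter_of_ne hp, ← nsmul_eq_mul]
  exact (Finset.abs_sum_le_sum_abs _ _).trans
    (Finset.sum_le_card_nsmul _ _ _ fun k hk => hC k (Finset.mem_filter.1 hk).1)

lemma le_rpow_mul_rpow_of_le {D A B θ : ℝ} (hD : 0 ≤ D) (hA : D ≤ A) (hB : D ≤ B)
    (hθ₀ : 0 ≤ θ) (hθ₁ : θ ≤ 1) : D ≤ A ^ θ * B ^ (1 - θ) :=
  calc D = D ^ θ * D ^ (1 - θ) := by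
        rw [← Real.rpow_add' hD (by norm_num), add_sub_cancel, Real.rpow_one]
    _ ≤ A ^ θ * B ^ (1 - θ) :=
        mul_le_mul (Real.rpow_le_rpow hD hA hθ₀) (Real.rpow_le_rpow hD hB (by linarith))
          (by positivity) (Real.rpow_nonneg (hD.trans hA) _)

lemma abs_tsum_sub_tsum_le {ι : Type*} {f g M : ι → ℝ} {c : ℝ} (hf : Summable f) (hg : Summable g)
    (hM : Summable M) (h : ∀ n, |f n - g n| ≤ c * M n) :
    |∑' n, f n - ∑' n, g n| ≤ c * ∑' n, M n := by
  rw [← hf.tsum_sub hg, ← tsum_mul_left]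
  exact tsum_of_norm_bounded (hM.mul_left c).hasSum (f := fun n => f n - g n) h

lemma haar_of_neg {x : ℝ} (hx : x < 0) : haar x = 0 := by
  rw [haar, if_neg (by intro h; linarith [h.1]), if_neg (by intro h; linarith [h.1])]

lemma haar_of_one_lt {x : ℝ} (hx : 1 < x) : haar x = 0 := by
  rw [haar, if_neg (by intro h; linarith [h.2]), if_neg (by intro h; linarith [h.2])]

lemma haar_of_mem_Ico {x : ℝ} (h₀ : 0 ≤ x) (h₁ : x < 1 / 2) : haar x = 1 := by
  rw [haar, if_pos ⟨h₀, h₁⟩]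

lemma haar_of_mem_Icc {x : ℝ} (h₀ : 1 / 2 ≤ x) (h₁ : x ≤ 1) : haar x = -1 := by
  rw [haar, if_neg (by intro h; linarith [h.2]), if_pos ⟨h₀, h₁⟩]

noncomputable def tent (x : ℝ) : ℝ := max 0 (min x (1 - x))

lemma continuous_tent : Continuous tent := by unfold tent; fun_prop

lemma tent_nonneg (x : ℝ) : 0 ≤ tent x := le_max_left _ _

lemma tent_le_half (x : ℝ) : tent x ≤ 1 / 2 :=
  max_le (by norm_num) <| by
    rcases le_total x (1 / 2) with h | h
    exacts [(min_le_left _ _).trans h, (min_le_right _ _).trans (by linarith)]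

lemma tent_of_nonpos {x : ℝ} (hx : x ≤ 0) : tent x = 0 :=
  max_eq_left ((min_le_left _ _).trans hx)

lemma tent_of_one_le {x : ℝ} (hx : 1 ≤ x) : tent x = 0 :=
  max_eq_left ((min_le_right _ _).trans (by linarith))

lemma tent_of_le_half {x : ℝ} (h₀ : 0 ≤ x) (h₁ : x ≤ 1 / 2) : tent x = x := by
  rw [tent, min_eq_left (by linarith), max_eq_right h₀]

lemma tent_of_half_le {x : ℝ} (h₀ : 1 / 2 ≤ x) (h₁ : x ≤ 1) : tent x = 1 - x := by
  rw [tent, min_eq_right (by linarith), max_eq_right (by linarith)]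

lemma mem_Ioo_of_tent_ne_zero {x : ℝ} (hx : tent x ≠ 0) : 0 < x ∧ x < 1 := by
  constructor <;> by_contra! h
  exacts [hx (tent_of_nonpos h), hx (tent_of_one_le h)]

lemma hasDerivAt_tent {x : ℝ} (h₀ : x ≠ 0) (h₁ : x ≠ 1 / 2) (h₂ : x ≠ 1) :
    HasDerivAt tent (haar x) x := by
  have local_model {U : Set ℝ} {g : ℝ → ℝ} {c : ℝ} (hU : U ∈ nhds x) (hg : Set.EqOn tent g U)
      (hc : haar x = c) (hd : HasDerivAt g c x) : HasDerivAt tent (haar x) x :=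
    hc ▸ hd.congr_of_eventuallyEq (Filter.eventually_of_mem hU hg)
  rcases lt_or_gt_of_ne h₀ with hx | hx
  · exact local_model (Iio_mem_nhds hx) (fun y hy => tent_of_nonpos (le_of_lt hy))
      (haar_of_neg hx) (hasDerivAt_const x 0)
  rcases lt_or_gt_of_ne h₁ with hx' | hx'
  · exact local_model (Ioo_mem_nhds hx hx') (fun y hy => tent_of_le_half hy.1.le hy.2.le)
      (haar_of_mem_Ico hx.le hx') (hasDerivAt_id x)
  rcases lt_or_gt_of_ne h₂ with hx'' | hx''
  · exact local_model (Ioo_mem_nhds hx' hx'') (fun y hy => tent_of_half_le hy.1.le hy.2.le)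
      (haar_of_mem_Icc hx'.le hx''.le) ((hasDerivAt_id x).const_sub 1)
  · exact local_model (Ioi_mem_nhds hx'') (fun y hy => tent_of_one_le (le_of_lt hy))
      (haar_of_one_lt hx'') (hasDerivAt_const x 0)

lemma measurable_haar : Measurable haar := by
  unfold haar
  exact Measurable.ite measurableSet_Ico measurable_const
    (Measurable.ite measurableSet_Icc measurable_const measurable_const)

lemma abs_haar_le_one (x : ℝ) : |haar x| ≤ 1 := by
  unfold haar; split_ifs <;> simp

lemma intervalIntegrable_haar (a b : ℝ) : IntervalIntegrable haar volume a b :=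
  intervalIntegrable_const.mono_fun' measurable_haar.aestronglyMeasurable
    (ae_of_all _ abs_haar_le_one)

lemma integral_haar (a b : ℝ) : ∫ x in a..b, haar x = tent b - tent a :=
  integral_eq_of_hasDerivAt_off_countable tent haar ((Set.toFinite {0, 1 / 2, 1}).countable)
    continuous_tent.continuousOn (fun x hx => by
      simp only [Set.mem_sdiff, Set.mem_insert_iff, Set.mem_singleton_iff, not_or] at hx
      exact hasDerivAt_tent hx.2.1 hx.2.2.1 hx.2.2.2)
    (intervalIntegrable_haar a b)

lemma abs_haarFn_le (n k : ℕ) (t : ℝ) : |haarFn n k t| ≤ 2 ^ ((n : ℝ) / 2) := by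
  unfold haarFn
  split_ifs with hn h
  · simp [hn]
  · simp [hn]
  · rw [abs_mul, abs_of_pos (by positivity)]
    exact mul_le_of_le_one_right (by positivity) (abs_haar_le_one _)

lemma measurable_haarFn (n k : ℕ) : Measurable (haarFn n k) := by
  unfold haarFn
  split_ifs
  · exact Measurable.ite measurableSet_Icc measurable_const measurable_const
  · exact (measurable_haar.comp ((measurable_id.const_mul _).sub measurable_const)).const_mul _

lemma intervalIntegrable_haarFn (n k : ℕ) (a b : ℝ) :
    IntervalIntegrable (haarFn n k) volume a b :=
  intervalIntegrable_const.mono_fun' (measurable_haarFn n k).aestronglyMeasurable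
    (ae_of_all _ (abs_haarFn_le n k))

lemma mem_Icc_of_haarFn_ne_zero {n k : ℕ} {t : ℝ} (hn : n ≠ 0) (h : haarFn n k t ≠ 0) :
    (k : ℝ) ∈ Set.Icc (2 ^ n * t - 1) (2 ^ n * t) := by
  simp only [haarFn, hn, if_false] at h
  constructor <;> by_contra! hk
  exacts [h (by rw [haar_of_one_lt (by linarith), mul_zero]),
    h (by rw [haar_of_neg (by linarith), mul_zero])]

lemma schauder_sub_schauder (n k : ℕ) (s t : ℝ) :
    schauder n k t - schauder n k s = ∫ u in s..t, haarFn n k u :=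
  intervalIntegral.integral_interval_sub_left (intervalIntegrable_haarFn n k 0 t)
    (intervalIntegrable_haarFn n k 0 s)

lemma schauder_zero_zero {t : ℝ} (ht : t ∈ Set.Icc (0 : ℝ) 1) : schauder 0 0 t = t := by
  have hone : Set.EqOn (haarFn 0 0) (fun _ => 1) (Set.uIcc 0 t) := by
    intro s hs
    rw [Set.uIcc_of_le ht.1] at hs
    simp [haarFn, hs.1, hs.2.trans ht.2]
  simp [schauder, intervalIntegral.integral_congr hone]

lemma schauder_eq_tent {n : ℕ} (hn : n ≠ 0) (k : ℕ) (t : ℝ) :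
    schauder n k t = 2 ^ (-(n : ℝ) / 2) * tent (2 ^ n * t - k) := by
  have hscale : (2 : ℝ) ^ ((n : ℝ) / 2) * ((2 : ℝ) ^ n)⁻¹ = 2 ^ (-(n : ℝ) / 2) := by
    rw [← Real.rpow_natCast, ← Real.rpow_neg zero_le_two, ← Real.rpow_add zero_lt_two]
    ring_nf
  simp only [schauder, haarFn, hn, if_false, intervalIntegral.integral_const_mul,
    intervalIntegral.integral_comp_mul_sub haar (pow_ne_zero n two_ne_zero), integral_haar,
    smul_eq_mul, mul_zero, zero_sub, tent_of_nonpos (neg_nonpos.2 (Nat.cast_nonneg k)), sub_zero]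
  rw [← mul_assoc, hscale]

lemma abs_schauder_le {n : ℕ} (hn : n ≠ 0) (k : ℕ) (t : ℝ) :
    |schauder n k t| ≤ 2 ^ (-(n : ℝ) / 2) / 2 := by
  rw [schauder_eq_tent hn, abs_mul, abs_of_pos (by positivity), abs_of_nonneg (tent_nonneg _)]
  have := tent_le_half (2 ^ n * t - k)
  have : (0 : ℝ) < 2 ^ (-(n : ℝ) / 2) := by positivity
  nlinarith

lemma mem_Ioo_of_schauder_ne_zero {n k : ℕ} {t : ℝ} (hn : n ≠ 0) (h : schauder n k t ≠ 0) :
    (k : ℝ) ∈ Set.Ioo (2 ^ n * t - 1) (2 ^ n * t) := by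
  rw [schauder_eq_tent hn] at h
  have := mem_Ioo_of_tent_ne_zero (right_ne_zero_of_mul h)
  constructor <;> linarith [this.1, this.2]

noncomputable def schauderLevel (W : ℕ → ℕ → ℝ) (n : ℕ) (t : ℝ) : ℝ :=
  ∑ k ∈ range (2 ^ n), W n k * schauder n k t

section schauderLevel

variable {W : ℕ → ℕ → ℝ} {n : ℕ} {V : ℝ}

lemma schauderLevel_zero {t : ℝ} (ht : t ∈ Set.Icc (0 : ℝ) 1) :
    schauderLevel W 0 t = W 0 0 * t := by
  simp [schauderLevel, schauder_zero_zero ht]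

lemma coeff_bound_nonneg (hW : ∀ k < 2 ^ n, |W n k| ≤ V) : 0 ≤ V :=
  (abs_nonneg _).trans (hW 0 (by positivity))

lemma abs_schauderLevel_le_of_ne_zero (hn : n ≠ 0) (hW : ∀ k < 2 ^ n, |W n k| ≤ V) (t : ℝ) :
    |schauderLevel W n t| ≤ V * 2 ^ (-(n : ℝ) / 2) / 2 :=
  calc |schauderLevel W n t|
      ≤ #((range (2 ^ n)).filter fun k : ℕ => (k : ℝ) ∈ Set.Ioo (2 ^ n * t - 1) (2 ^ n * t)) *
          (V * (2 ^ (-(n : ℝ) / 2) / 2)) :=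
        abs_sum_le_card_filter_mul _
          (fun k _ h => mem_Ioo_of_schauder_ne_zero hn (right_ne_zero_of_mul h))
          (fun k hk => by
            rw [abs_mul]
            exact mul_le_mul (hW k (mem_range.1 hk)) (abs_schauder_le hn k t) (abs_nonneg _)
              (coeff_bound_nonneg hW))
    _ ≤ 1 * (V * (2 ^ (-(n : ℝ) / 2) / 2)) := by
        gcongr
        · exact mul_nonneg (coeff_bound_nonneg hW) (by positivity)
        · exact_mod_cast card_filter_mem_Ioo_le_one _ _
    _ = V * 2 ^ (-(n : ℝ) / 2) / 2 := by ring

lemma abs_schauderLevel_le (hW : ∀ k < 2 ^ n, |W n k| ≤ V) {t : ℝ}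
    (ht : t ∈ Set.Icc (0 : ℝ) 1) : |schauderLevel W n t| ≤ V * 2 ^ (-(n : ℝ) / 2) := by
  rcases eq_or_ne n 0 with rfl | hn
  · rw [schauderLevel_zero ht, abs_mul, abs_of_nonneg ht.1]
    simpa using mul_le_mul (hW 0 one_pos) ht.2 ht.1 (coeff_bound_nonneg hW)
  · have := abs_schauderLevel_le_of_ne_zero hn hW t
    have : 0 ≤ V * 2 ^ (-(n : ℝ) / 2) := mul_nonneg (coeff_bound_nonneg hW) (by positivity)
    linarith

lemma abs_sum_haarFn_le (hn : n ≠ 0) (hW : ∀ k < 2 ^ n, |W n k| ≤ V) (u : ℝ) :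
    |∑ k ∈ range (2 ^ n), W n k * haarFn n k u| ≤ 2 * V * 2 ^ ((n : ℝ) / 2) :=
  calc |∑ k ∈ range (2 ^ n), W n k * haarFn n k u|
      ≤ #((range (2 ^ n)).filter fun k : ℕ => (k : ℝ) ∈ Set.Icc (2 ^ n * u - 1) (2 ^ n * u)) *
          (V * 2 ^ ((n : ℝ) / 2)) :=
        abs_sum_le_card_filter_mul _
          (fun k _ h => mem_Icc_of_haarFn_ne_zero hn (right_ne_zero_of_mul h))
          (fun k hk => by
            rw [abs_mul]
            exact mul_le_mul (hW k (mem_range.1 hk)) (abs_haarFn_le n k u) (abs_nonneg _)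
              (coeff_bound_nonneg hW))
    _ ≤ 2 * (V * 2 ^ ((n : ℝ) / 2)) := by
        gcongr
        · exact mul_nonneg (coeff_bound_nonneg hW) (by positivity)
        · exact_mod_cast card_filter_mem_Icc_le_two _ _
    _ = 2 * V * 2 ^ ((n : ℝ) / 2) := by ring

lemma abs_schauderLevel_sub_le_mul_sub (hn : n ≠ 0) (hW : ∀ k < 2 ^ n, |W n k| ≤ V)
    {s t : ℝ} (hst : s ≤ t) :
    |schauderLevel W n t - schauderLevel W n s| ≤ 2 * V * 2 ^ ((n : ℝ) / 2) * (t - s) := by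
  have hint : schauderLevel W n t - schauderLevel W n s =
      ∫ u in s..t, ∑ k ∈ range (2 ^ n), W n k * haarFn n k u := by
    simp only [schauderLevel, ← Finset.sum_sub_distrib, ← mul_sub, schauder_sub_schauder]
    rw [intervalIntegral.integral_finsetSum
      fun k _ => (intervalIntegrable_haarFn n k s t).const_mul (W n k)]
    simp only [intervalIntegral.integral_const_mul]
  rw [hint]
  simpa [abs_of_nonneg (sub_nonneg.2 hst)] using
    intervalIntegral.norm_integral_le_of_norm_le_const (a := s) (b := t)
      (f := fun u => ∑ k ∈ range (2 ^ n), W n k * haarFn n k u)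
      fun u _ => (Real.norm_eq_abs _).trans_le (abs_sum_haarFn_le hn hW u)

lemma abs_schauderLevel_sub_le_rpow_of_ne_zero (hn : n ≠ 0) {α : ℝ} (hα₀ : 0 ≤ α)
    (hα₁ : α ≤ 1) (hW : ∀ k < 2 ^ n, |W n k| ≤ V) {s t : ℝ} (hst : s ≤ t) :
    |schauderLevel W n t - schauderLevel W n s| ≤
      2 ^ α * (t - s) ^ α * (2 ^ (-(n : ℝ) * (1 / 2 - α)) * V) := by
  have hV := coeff_bound_nonneg hW
  set x : ℝ := 2 ^ ((n : ℝ) / 2)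
  have hx : 0 < x := by positivity
  have hosc : |schauderLevel W n t - schauderLevel W n s| ≤ V * x⁻¹ := by
    rw [← Real.rpow_neg zero_le_two, ← neg_div]
    linarith [abs_sub (schauderLevel W n t) (schauderLevel W n s),
      abs_schauderLevel_le_of_ne_zero hn hW t, abs_schauderLevel_le_of_ne_zero hn hW s]
  have hpow : x ^ α * x⁻¹ ^ (1 - α) = 2 ^ (-(n : ℝ) * (1 / 2 - α)) := by
    rw [Real.inv_rpow hx.le, ← Real.rpow_neg hx.le, ← Real.rpow_add hx, ← Real.rpow_mul zero_le_two]
    ring_nf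
  calc |schauderLevel W n t - schauderLevel W n s|
      ≤ (2 * V * x * (t - s)) ^ α * (V * x⁻¹) ^ (1 - α) :=
        le_rpow_mul_rpow_of_le (abs_nonneg _) (abs_schauderLevel_sub_le_mul_sub hn hW hst) hosc
          hα₀ hα₁
    _ = 2 ^ α * (t - s) ^ α * (x ^ α * x⁻¹ ^ (1 - α) * (V ^ α * V ^ (1 - α))) := by
        rw [Real.mul_rpow (by positivity) (sub_nonneg.2 hst), Real.mul_rpow (by positivity) hx.le,
          Real.mul_rpow zero_le_two hV, Real.mul_rpow hV (by positivity)]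
        ring
    _ = 2 ^ α * (t - s) ^ α * (2 ^ (-(n : ℝ) * (1 / 2 - α)) * V) := by
        rw [hpow, ← Real.rpow_add' hV (by norm_num), add_sub_cancel, Real.rpow_one]

lemma abs_schauderLevel_sub_le_rpow {α : ℝ} (hα₀ : 0 ≤ α) (hα₁ : α ≤ 1)
    (hW : ∀ k < 2 ^ n, |W n k| ≤ V) {s t : ℝ} (hs : 0 ≤ s) (hst : s ≤ t) (ht : t ≤ 1) :
    |schauderLevel W n t - schauderLevel W n s| ≤
      2 ^ (2 * α) * (t - s) ^ α * (2 ^ (-(n : ℝ) * (1 / 2 - α)) * V) := by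
  have hδ : 0 ≤ t - s := sub_nonneg.2 hst
  have hV := coeff_bound_nonneg hW
  rcases eq_or_ne n 0 with rfl | hn
  · rw [schauderLevel_zero ⟨by linarith, ht⟩, schauderLevel_zero ⟨hs, by linarith⟩, ← mul_sub,
      abs_mul, abs_of_nonneg hδ]
    have hδα : t - s ≤ (t - s) ^ α := Real.self_le_rpow_of_le_one hδ (by linarith) hα₁
    have h1 : (1 : ℝ) ≤ 2 ^ (2 * α) := Real.one_le_rpow one_le_two (by linarith)
    calc |W 0 0| * (t - s) ≤ V * (t - s) ^ α := mul_le_mul (hW 0 one_pos) hδα hδ hV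
      _ ≤ 2 ^ (2 * α) * (t - s) ^ α * V := by
          nlinarith [mul_nonneg (Real.rpow_nonneg hδ α) hV]
      _ = _ := by simp
  · have h2α : (2 : ℝ) ^ α ≤ 2 ^ (2 * α) :=
      Real.rpow_le_rpow_of_exponent_le one_le_two (by linarith)
    calc |schauderLevel W n t - schauderLevel W n s|
        ≤ 2 ^ α * (t - s) ^ α * (2 ^ (-(n : ℝ) * (1 / 2 - α)) * V) :=
          abs_schauderLevel_sub_le_rpow_of_ne_zero hn hα₀ hα₁ hW hst
      _ ≤ _ := by gcongr

end schauderLevel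

theorem wavelet_holder_bound
    (α : ℝ) (hα1 : 0 < α) (hα2 : α < 1 / 2)
    (W : ℕ → ℕ → ℝ) (V : ℕ → ℝ)
    (hV : ∀ n, IsGreatest {x : ℝ | ∃ k < 2 ^ n, x = |W n k|} (V n))
    (hsum : Summable fun n : ℕ => 2 ^ (-(n : ℝ) * (1 / 2 - α)) * V n) :
    ∃ Z : ℝ → ℝ,
      TendstoUniformlyOn
        (fun (N : ℕ) (t : ℝ) =>
          ∑ n ∈ Finset.range N, ∑ k ∈ Finset.range (2 ^ n), W n k * schauder n k t)
        Z atTop (Set.Icc 0 1) ∧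
      ∀ s t : ℝ, 0 ≤ s → s < t → t ≤ 1 →
        |Z t - Z s| ≤
          2 ^ (2 * α) * (∑' n : ℕ, 2 ^ (-(n : ℝ) * (1 / 2 - α)) * V n) * (t - s) ^ α := by
  have hW : ∀ n, ∀ k < 2 ^ n, |W n k| ≤ V n := fun n k hk => (hV n).2 ⟨k, hk, rfl⟩
  have hbound : ∀ n, ∀ t ∈ Set.Icc (0 : ℝ) 1,
      ‖schauderLevel W n t‖ ≤ 2 ^ (-(n : ℝ) * (1 / 2 - α)) * V n := fun n t ht =>
    calc ‖schauderLevel W n t‖ ≤ V n * 2 ^ (-(n : ℝ) / 2) := abs_schauderLevel_le (hW n) ht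
      _ ≤ V n * 2 ^ (-(n : ℝ) * (1 / 2 - α)) := by
          gcongr
          · exact coeff_bound_nonneg (hW n)
          · exact one_le_two
          · nlinarith [(Nat.cast_nonneg n : (0 : ℝ) ≤ n)]
      _ = _ := mul_comm _ _
  have hsummable {t : ℝ} (ht : t ∈ Set.Icc (0 : ℝ) 1) : Summable (schauderLevel W · t) :=
    hsum.of_norm_bounded fun n => hbound n t ht
  refine ⟨fun t => ∑' n, schauderLevel W n t, tendstoUniformlyOn_tsum_nat hsum hbound,
    fun s t hs hst ht => ?_⟩
  rw [mul_right_comm]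
  exact abs_tsum_sub_tsum_le (hsummable ⟨by linarith, ht⟩) (hsummable ⟨hs, by linarith⟩) hsum
    fun n => abs_schauderLevel_sub_le_rpow hα1.le (by linarith) (hW n) hs hst.le ht
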